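/- arXiv:2103.12494 — 3 statements merged into one kernel-verified Lean document; each statement's English description precedes it below -/
import Mathlib

section
/- The subgroup A_n = ⟨x_1^2, …, x_n^2⟩ of the combinatorial Hantzsche-Wendt group G_n is a free abelian group of rank n. -/
/-- The relations of the combinatorial Hantzsche-Wendt group:
`xᵢ⁻¹ xⱼ² xᵢ xⱼ²` for all `i ≠ j`. -/
def HWrels (n : ℕ) : Set (FreeGroup (Fin n)) :=
  {r | ∃ i j : Fin n, i ≠ j ∧
    r = (FreeGroup.of i)⁻¹ * (FreeGroup.of j) ^ 2 * FreeGroup.of i * (FreeGroup.of j) ^ 2}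

/-- The combinatorial Hantzsche-Wendt group `Gₙ`. -/
abbrev HW (n : ℕ) : Type := PresentedGroup (HWrels n)

/-- The generators `x₁, …, xₙ` of `Gₙ`. -/
def HWx (n : ℕ) (i : Fin n) : HW n := PresentedGroup.of i

namespace HWaux

open DihedralGroup Multiplicative

lemma rel_eq_one {n : ℕ} {i j : Fin n} (hij : i ≠ j) :
    (HWx n i)⁻¹ * (HWx n j) ^ 2 * HWx n i * (HWx n j) ^ 2 = 1 := by
  have hmem : ((FreeGroup.of i)⁻¹ * (FreeGroup.of j) ^ 2 * FreeGroup.of i * (FreeGroup.of j) ^ 2)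
      ∈ Subgroup.normalClosure (HWrels n) :=
    Subgroup.subset_normalClosure ⟨i, j, hij, rfl⟩
  have h1 : ((QuotientGroup.mk ((FreeGroup.of i)⁻¹ * (FreeGroup.of j) ^ 2 * FreeGroup.of i *
      (FreeGroup.of j) ^ 2) : HW n)) = 1 := (QuotientGroup.eq_one_iff _).mpr hmem
  exact h1

lemma sq_comm {n : ℕ} (i j : Fin n) :
    Commute ((HWx n i) ^ 2) ((HWx n j) ^ 2) := by
  rcases eq_or_ne i j with rfl | hij
  · exact Commute.refl _
  · set a := HWx n i with ha
    set b := (HWx n j) ^ 2 with hb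
    have h : a⁻¹ * b * a * b = 1 := rel_eq_one hij
    have h1 : a⁻¹ * b * a = b⁻¹ := mul_eq_one_iff_eq_inv.mp h
    have h2 : a⁻¹ * b⁻¹ * a = b := by
      have e : a⁻¹ * b⁻¹ * a = (a⁻¹ * b * a)⁻¹ := by group
      rw [e, h1, inv_inv]
    have k1 : a⁻¹ * a⁻¹ * b * a * a = b := by
      have e : a⁻¹ * a⁻¹ * b * a * a = a⁻¹ * (a⁻¹ * b * a) * a := by group
      rw [e, h1, h2]
    have key : b * (a * a) = (a * a) * b := by
      calc b * (a * a) = a * a * (a⁻¹ * a⁻¹ * b * a * a) := by group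
        _ = a * a * b := by rw [k1]
    show a ^ 2 * b = b * a ^ 2
    calc a ^ 2 * b = a * a * b := by rw [sq]
      _ = b * (a * a) := key.symm
      _ = b * a ^ 2 := by rw [sq]

/-- The homomorphism `ℤⁿ → Gₙ`, `eᵢ ↦ xᵢ²`. -/
noncomputable def α (n : ℕ) : Multiplicative (Fin n → ℤ) →* HW n :=
  (MonoidHom.noncommPiCoprod (fun i => zpowersHom (HW n) ((HWx n i) ^ 2))
    (by intro i j _ x y; exact (sq_comm i j).zpow_zpow (toAdd x) (toAdd y))).comp
    (MulEquiv.funMultiplicative (Fin n) ℤ).toMonoidHom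

lemma α_single {n : ℕ} (j : Fin n) (m : ℤ) :
    α n (ofAdd (Pi.single j m)) = ((HWx n j) ^ 2) ^ m := by
  have hδ : (MulEquiv.funMultiplicative (Fin n) ℤ) (ofAdd (Pi.single j m))
      = Pi.mulSingle j (ofAdd m) := by
    funext k
    simp only [MulEquiv.piMultiplicative_apply, toAdd_ofAdd, Pi.single_apply, Pi.mulSingle_apply]
    split_ifs <;> simp
  simp only [α, MonoidHom.comp_apply, MulEquiv.coe_toMonoidHom]
  rw [hδ]
  erw [MonoidHom.noncommPiCoprod_mulSingle]
  rfl

lemma α_range (n : ℕ) :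
    (α n).range = Subgroup.closure (Set.range fun i : Fin n => (HWx n i) ^ 2) := by
  have hbig : (MonoidHom.noncommPiCoprod (fun i => zpowersHom (HW n) ((HWx n i) ^ 2))
      (by intro i j _ x y; exact (sq_comm i j).zpow_zpow (toAdd x) (toAdd y))).range
      = ⨆ i : Fin n, Subgroup.zpowers ((HWx n i) ^ 2) := by
    erw [MonoidHom.noncommPiCoprod_range]
    simp [Subgroup.range_zpowersHom]
  have hr : (α n).range = ⨆ i : Fin n, Subgroup.zpowers ((HWx n i) ^ 2) := by
    rw [← hbig]
    ext x
    constructor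
    · rintro ⟨v, rfl⟩
      exact ⟨_, rfl⟩
    · rintro ⟨w, rfl⟩
      exact ⟨(MulEquiv.funMultiplicative (Fin n) ℤ).symm w, by
        simp only [α, MonoidHom.comp_apply, MulEquiv.coe_toMonoidHom,
          MulEquiv.apply_symm_apply]⟩
  rw [hr]
  rw [show (Set.range fun i : Fin n => (HWx n i) ^ 2) = ⋃ i, {(HWx n i) ^ 2} from
    Set.range_eq_iUnion _]
  rw [Subgroup.closure_iUnion]
  simp [Subgroup.zpowers_eq_closure]

/-- Targets in the infinite dihedral group. -/
def Df (n : ℕ) (i : Fin n) : Fin n → DihedralGroup 0 := fun j => if j = i then r 1 else sr 0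

lemma sr_inv (x : ZMod 0) : (sr x : DihedralGroup 0)⁻¹ = sr x :=
  inv_eq_of_mul_eq_one_right (sr_mul_self x)

lemma r_inv (x : ZMod 0) : (r x : DihedralGroup 0)⁻¹ = r (-x) :=
  inv_eq_of_mul_eq_one_right (by rw [r_mul_r, add_neg_cancel, one_def])

lemma r_one_zpow (m : ℤ) : (r 1 : DihedralGroup 0) ^ m = r m := by
  induction m using Int.induction_on with
  | zero => rw [zpow_zero, one_def]; rfl
  | succ k ih => rw [zpow_add_one, ih]; exact r_mul_r _ _
  | pred k ih => rw [zpow_sub_one, ih, r_inv]; exact (r_mul_r _ _).trans (congrArg r (sub_eq_add_neg _ _).symm)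

lemma lift_rel (n : ℕ) (i : Fin n) : ∀ rr ∈ HWrels n, FreeGroup.lift (Df n i) rr = 1 := by
  rintro _ ⟨j, k, hjk, rfl⟩
  simp only [map_mul, map_inv, map_pow, FreeGroup.lift_apply_of, Df]
  by_cases hk : k = i
  · subst hk
    rw [if_neg hjk, if_pos rfl, sr_inv, sq, r_mul_r, sr_mul_r, sr_mul_sr, r_mul_r, one_def]
    norm_num
  · rw [if_neg hk]
    by_cases hj : j = i <;>
      simp [hj, sq, sr_mul_self, r_inv, r_mul_r, sr_inv]

/-- The detection homomorphism `Gₙ → D∞` for coordinate `i`. -/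
noncomputable def φ (n : ℕ) (i : Fin n) : HW n →* DihedralGroup 0 :=
  PresentedGroup.toGroup (lift_rel n i)

/-- The model homomorphism `ℤⁿ → D∞`, `v ↦ r (2 v i)`. -/
def Dm (n : ℕ) (i : Fin n) : Multiplicative (Fin n → ℤ) →* DihedralGroup 0 :=
  MonoidHom.mk' (fun v => (r (2 * toAdd v i : ℤ) : DihedralGroup 0)) (by
    intro a b
    erw [r_mul_r]
    simp only [toAdd_mul, Pi.add_apply]
    ring_nf
    rfl)

lemma closure_singles (n : ℕ) :
    Subgroup.closure (Set.range fun p : Fin n × ℤ =>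
      (ofAdd (Pi.single p.1 p.2) : Multiplicative (Fin n → ℤ))) = ⊤ := by
  rw [Subgroup.eq_top_iff']
  intro v
  have hv : v = ∏ j : Fin n, (ofAdd (Pi.single j (toAdd v j)) : Multiplicative (Fin n → ℤ)) := by
    rw [← ofAdd_sum]
    rw [Finset.univ_sum_single (toAdd v)]
    rfl
  rw [hv]
  exact Subgroup.prod_mem _ fun j _ => Subgroup.subset_closure ⟨(j, toAdd v j), rfl⟩

lemma φ_comp_α (n : ℕ) (i : Fin n) : (φ n i).comp (α n) = Dm n i := by
  apply MonoidHom.eq_of_eqOn_dense (closure_singles n)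
  rintro _ ⟨⟨j, m⟩, rfl⟩
  simp only [MonoidHom.comp_apply]
  rw [α_single, map_zpow, Dm]
  have hgen : φ n i ((HWx n j) ^ 2) = (Df n i j) ^ 2 := by
    rw [map_pow]
    exact congrArg (· ^ 2) (PresentedGroup.toGroup.of (lift_rel n i))
  rw [hgen]
  by_cases hj : j = i
  · subst hj
    simp only [Df, if_true, eq_self_iff_true, if_pos, MonoidHom.mk'_apply, toAdd_ofAdd,
      Pi.single_eq_same]
    rw [← zpow_natCast (r 1 : DihedralGroup 0) 2, ← zpow_mul, r_one_zpow]
    norm_num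
  · have hz : (Pi.single j m : Fin n → ℤ) i = 0 := by simp [Pi.single_apply, Ne.symm hj]
    simp only [Df, if_neg hj, MonoidHom.mk'_apply, toAdd_ofAdd, hz, mul_zero]
    rw [sq, sr_mul_self, one_zpow, one_def]
    rfl

lemma α_inj (n : ℕ) : Function.Injective (α n) := by
  rw [injective_iff_map_eq_one]
  intro v hv
  have hco : ∀ i : Fin n, (toAdd v i : ℤ) = 0 := by
    intro i
    have h1 : Dm n i v = 1 := by
      rw [← φ_comp_α n i, MonoidHom.comp_apply, hv, map_one]
    have h2 : (r (2 * toAdd v i : ℤ) : DihedralGroup 0) = r 0 := by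
      rw [← one_def]; exact h1
    have h3 : (2 * toAdd v i : ℤ) = 0 := by injection h2
    omega
  have : toAdd v = 0 := by
    funext i
    simp only [Pi.zero_apply]
    exact hco i
  calc v = ofAdd (toAdd v) := rfl
    _ = ofAdd 0 := by rw [this]
    _ = 1 := rfl

end HWaux

/-- `Aₙ = ⟨x₁², …, xₙ²⟩ ≤ Gₙ` is free abelian of rank `n`. -/
theorem A_free_abelian (n : ℕ) :
    Nonempty ((Subgroup.closure (Set.range fun i : Fin n => (HWx n i) ^ 2)) ≃*
      Multiplicative (Fin n → ℤ)) := by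
  exact ⟨(MulEquiv.subgroupCongr (HWaux.α_range n).symm).trans
    (MonoidHom.ofInjective (HWaux.α_inj n)).symm⟩
end

section
/- For n > 1, the center of the combinatorial Hantzsche-Wendt group G_n is trivial. -/
namespace HWproof

/-- Model group: `ℤⁿ ⋊ (ℤˣ)ⁿ` with diagonal action. -/
@[ext]
structure Hgrp (n : ℕ) where
  v : Fin n → ℤ
  s : Fin n → ℤˣ

namespace Hgrp

variable {n : ℕ}

instance : Mul (Hgrp n) := ⟨fun a b => ⟨a.v + fun j => (a.s j : ℤ) * b.v j, a.s * b.s⟩⟩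
instance : One (Hgrp n) := ⟨⟨0, 1⟩⟩
instance : Inv (Hgrp n) := ⟨fun a => ⟨fun j => -((a.s j : ℤ) * a.v j), a.s⟩⟩

@[simp] theorem mul_v (a b : Hgrp n) (j : Fin n) :
    (a * b).v j = a.v j + (a.s j : ℤ) * b.v j := rfl
@[simp] theorem mul_s (a b : Hgrp n) (j : Fin n) : (a * b).s j = a.s j * b.s j := rfl
@[simp] theorem one_v (j : Fin n) : (1 : Hgrp n).v j = 0 := rfl
@[simp] theorem one_s (j : Fin n) : (1 : Hgrp n).s j = 1 := rfl
@[simp] theorem inv_v (a : Hgrp n) (j : Fin n) : (a⁻¹).v j = -((a.s j : ℤ) * a.v j) := rfl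
@[simp] theorem inv_s (a : Hgrp n) (j : Fin n) : (a⁻¹).s j = a.s j := rfl

theorem ext_pt {a b : Hgrp n} (h1 : ∀ j, a.v j = b.v j) (h2 : ∀ j, a.s j = b.s j) : a = b := by
  ext j
  · exact h1 j
  · exact congrArg Units.val (h2 j)

instance : Group (Hgrp n) where
  mul_assoc a b c := ext_pt (fun j => by simp; ring) (fun j => mul_assoc _ _ _)
  one_mul a := ext_pt (fun j => by simp) (fun j => one_mul _)
  mul_one a := ext_pt (fun j => by simp) (fun j => mul_one _)
  inv_mul_cancel a := ext_pt (fun j => by simp) (fun j => by simp [Int.units_mul_self])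

end Hgrp

end HWproof

namespace HWproof

variable {n : ℕ}

/-- image of the `i`-th generator in the model group. -/
def gen (i : Fin n) : Hgrp n :=
  ⟨Pi.single i 1, fun j => if j = i then 1 else -1⟩

theorem gen_sq (i : Fin n) : (gen i) ^ 2 = ⟨Pi.single i 2, 1⟩ := by
  rw [sq]
  refine Hgrp.ext_pt (fun j => ?_) (fun j => ?_)
  · by_cases h : j = i <;> simp [gen, h, Pi.single_apply]
  · by_cases h : j = i <;> simp [gen, h]

theorem gen_rel {i j : Fin n} (hij : i ≠ j) :
    (gen i)⁻¹ * (gen j) ^ 2 * gen i * (gen j) ^ 2 = 1 := by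
  rw [gen_sq]
  refine Hgrp.ext_pt (fun k => ?_) (fun k => ?_)
  · by_cases h : k = j
    · subst h
      have hki : k ≠ i := Ne.symm hij
      simp [gen, hki, Pi.single_apply]
      try ring
    · simp [gen, h, Pi.single_apply]
  · by_cases h : k = i <;> simp [gen, h]

/-- The homomorphism `Φ : HW n →* Hgrp n`. -/
def Phi : HW n →* Hgrp n :=
  PresentedGroup.toGroup (f := gen) (by
    rintro r ⟨i, j, hij, rfl⟩
    simp only [map_mul, map_inv, map_pow, FreeGroup.lift_apply_of]
    exact gen_rel hij)

@[simp] theorem Phi_of (i : Fin n) : Phi (HWx n i) = gen i :=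
  PresentedGroup.toGroup.of _

end HWproof

namespace HWproof

variable {n : ℕ}

theorem Phi_central (hn : 1 < n) {g : HW n} (hg : g ∈ Subgroup.center (HW n)) :
    Phi g = 1 := by
  have key : ∀ i : Fin n, Phi g * gen i = gen i * Phi g := by
    intro i
    rw [← Phi_of, ← map_mul, ← map_mul,
      (Subgroup.mem_center_iff.mp hg (HWx n i)).symm]
  have hs : ∀ i : Fin n, (Phi g).s i = 1 := by
    intro i
    have h := congrArg (fun a => Hgrp.v a i) (key i)
    simp [gen, Pi.single_apply] at h
    have h2 : ((Phi g).s i : ℤ) = 1 := by omega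
    exact Units.ext_iff.mpr h2
  refine Hgrp.ext_pt (fun j => ?_) hs
  -- pick i ≠ j
  haveI : Nontrivial (Fin n) :=
    ⟨⟨⟨0, by omega⟩, ⟨1, by omega⟩, by simp [Fin.ext_iff]⟩⟩
  rcases exists_ne j with ⟨i, hij⟩
  have h := congrArg (fun a => Hgrp.v a j) (key i)
  simp [gen, Pi.single_apply, Ne.symm hij, hs, hij] at h
  simp only [Hgrp.one_v]
  omega

end HWproof

namespace HWproof

variable {n : ℕ}

/-- reduced words for the free product of `n` copies of `C₂`. -/
abbrev Lch (n : ℕ) := {l : List (Fin n) // l.IsChain (· ≠ ·)}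

/-- the step function: prepend-or-cancel the letter `i`. -/
def step (i : Fin n) : Lch n → Lch n := fun l =>
  match l with
  | ⟨[], _⟩ => ⟨[i], List.isChain_singleton i⟩
  | ⟨j :: t, h⟩ =>
    if hj : i = j then ⟨t, h.tail⟩
    else ⟨i :: j :: t, List.isChain_cons_cons.mpr ⟨hj, h⟩⟩

@[simp] theorem step_nil (i : Fin n) (h) : step i ⟨[], h⟩ = ⟨[i], List.isChain_singleton i⟩ := rfl

theorem step_cons_eq (i : Fin n) (t : List (Fin n)) (h) :
    step i ⟨i :: t, h⟩ = ⟨t, h.tail⟩ := by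
  simp [step]

theorem step_cons_ne {i j : Fin n} (hij : i ≠ j) (t : List (Fin n)) (h) :
    step i ⟨j :: t, h⟩ = ⟨i :: j :: t, List.isChain_cons_cons.mpr ⟨hij, h⟩⟩ := by
  simp [step, hij]

theorem step_step (i : Fin n) (l : Lch n) : step i (step i l) = l := by
  obtain ⟨l, hl⟩ := l
  match l, hl with
  | [], _ => simp [step]
  | j :: t, h =>
    by_cases hj : i = j
    · subst hj
      rw [step_cons_eq]
      match t, h.tail with
      | [], _ => simp [step]
      | k :: t', h' =>
        have hik : i ≠ k := List.isChain_cons_cons.mp h |>.1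
        exact step_cons_ne hik t' h'
    · rw [step_cons_ne hj, step_cons_eq]

/-- `r i` : the permutation given by the letter `i`. -/
def rr (i : Fin n) : Equiv.Perm (Lch n) :=
  ⟨step i, step i, step_step i, step_step i⟩

@[simp] theorem rr_apply (i : Fin n) (l : Lch n) : rr i l = step i l := rfl

theorem rr_sq (i : Fin n) : (rr i) ^ 2 = 1 := by
  rw [sq]
  ext l : 1
  exact step_step i l

theorem rr_inv (i : Fin n) : (rr i)⁻¹ = rr i :=
  inv_eq_of_mul_eq_one_right (by rw [← sq, rr_sq])

/-- The homomorphism `π' : HW n →* Perm (Lch n)`. -/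
def piP : HW n →* Equiv.Perm (Lch n) :=
  PresentedGroup.toGroup (f := rr) (by
    rintro r ⟨i, j, hij, rfl⟩
    simp only [map_mul, map_inv, map_pow, FreeGroup.lift_apply_of]
    rw [rr_sq]
    group)

@[simp] theorem piP_of (i : Fin n) : piP (HWx n i) = rr i :=
  PresentedGroup.toGroup.of _

/-- the permutation attached to a (not necessarily reduced) word -/
def act (w : List (Fin n)) : Equiv.Perm (Lch n) := (w.map rr).prod

@[simp] theorem act_nil : act ([] : List (Fin n)) = 1 := rfl

theorem act_cons (i : Fin n) (w : List (Fin n)) : act (i :: w) = rr i * act w := by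
  simp [act]

theorem act_append (w₁ w₂ : List (Fin n)) : act (w₁ ++ w₂) = act w₁ * act w₂ := by
  simp [act]

theorem act_reverse (w : List (Fin n)) : act w.reverse = (act w)⁻¹ := by
  induction w with
  | nil => simp
  | cons i w ih =>
    rw [List.reverse_cons, act_append, act_cons, ih, act_cons, act_nil, mul_one,
      mul_inv_rev, rr_inv]

theorem exists_word (g : HW n) : ∃ w : List (Fin n), piP g = act w := by
  let K : Subgroup (HW n) :=
    { carrier := {g | ∃ w : List (Fin n), piP g = act w}
      one_mem' := ⟨[], by simp⟩
      mul_mem' := by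
        rintro a b ⟨w₁, h₁⟩ ⟨w₂, h₂⟩
        exact ⟨w₁ ++ w₂, by rw [map_mul, h₁, h₂, act_append]⟩
      inv_mem' := by
        rintro a ⟨w, h⟩
        exact ⟨w.reverse, by rw [map_inv, h, act_reverse]⟩ }
  exact PresentedGroup.generated_by _ K (fun j => ⟨[j], by rw [show (PresentedGroup.of j : HW n) = HWx n j from rfl, piP_of, act_cons, act_nil, mul_one]⟩) g

end HWproof

namespace HWproof

variable {n : ℕ}

theorem step_val (i : Fin n) (l : Lch n) (hne : ∀ y ∈ l.1.head?, i ≠ y) :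
    (step i l).1 = i :: l.1 := by
  obtain ⟨l, hl⟩ := l
  match l, hl with
  | [], _ => rfl
  | j :: t, h =>
    have hij : i ≠ j := hne j rfl
    rw [step_cons_ne hij]

theorem not_chain'_split {w : List (Fin n)} (hw : ¬ w.IsChain (· ≠ ·)) :
    ∃ (u : List (Fin n)) (j : Fin n) (v : List (Fin n)), w = u ++ j :: j :: v := by
  induction w with
  | nil => exact absurd List.isChain_nil hw
  | cons a w ih =>
    match w with
    | [] => exact absurd (List.isChain_singleton a) hw
    | b :: t =>
      by_cases hab : a = b
      · exact ⟨[], a, t, by rw [hab]; rfl⟩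
      · have : ¬ (b :: t).IsChain (· ≠ ·) := fun h => hw (List.isChain_cons_cons.mpr ⟨hab, h⟩)
        obtain ⟨u, j, v, huv⟩ := ih this
        exact ⟨a :: u, j, v, by rw [huv]; rfl⟩

theorem act_reduce_aux : ∀ (k : ℕ) (w : List (Fin n)), w.length ≤ k →
    ∃ c : List (Fin n), c.IsChain (· ≠ ·) ∧ act w = act c := by
  intro k
  induction k with
  | zero =>
    intro w hw
    have : w = [] := List.eq_nil_of_length_eq_zero (Nat.le_zero.mp hw)
    exact ⟨[], by simp [this]⟩
  | succ k ih =>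
    intro w hw
    by_cases hc : w.IsChain (· ≠ ·)
    · exact ⟨w, hc, rfl⟩
    · obtain ⟨u, j, v, rfl⟩ := not_chain'_split hc
      have hlen : (u ++ v).length ≤ k := by
        simp only [List.length_append, List.length_cons] at hw ⊢
        omega
      obtain ⟨c, hc, he⟩ := ih (u ++ v) hlen
      refine ⟨c, hc, ?_⟩
      rw [← he, act_append, act_append, act_cons, act_cons, ← mul_assoc, ← mul_assoc,
        mul_assoc (act u), ← sq, rr_sq, mul_one]

theorem act_reduce (w : List (Fin n)) :
    ∃ c : List (Fin n), c.IsChain (· ≠ ·) ∧ act w = act c :=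
  act_reduce_aux w.length w le_rfl

theorem act_chain : ∀ (w l : List (Fin n)) (h : (w ++ l).IsChain (· ≠ ·)),
    act w ⟨l, (List.isChain_append.mp h).2.1⟩ = ⟨w ++ l, h⟩ := by
  intro w
  induction w with
  | nil => intro l h; simp
  | cons a w ih =>
    intro l h
    have h' : (w ++ l).IsChain (· ≠ ·) := (List.isChain_cons.mp h).2
    rw [act_cons, Equiv.Perm.mul_apply]
    have : (⟨l, (List.isChain_append.mp h).2.1⟩ : Lch n)
        = ⟨l, (List.isChain_append.mp h').2.1⟩ := rfl
    rw [this, ih l h', rr_apply]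
    exact Subtype.ext (step_val a _ (List.isChain_cons.mp h).1)

end HWproof

namespace HWproof

variable {n : ℕ}

theorem central_fixes (hn : 1 < n) {g : HW n} (hg : g ∈ Subgroup.center (HW n)) :
    piP g ⟨[], List.isChain_nil⟩ = ⟨[], List.isChain_nil⟩ := by
  obtain ⟨w, hw⟩ := exists_word g
  obtain ⟨c, hc, hwc⟩ := act_reduce w
  have hpi : piP g = act c := hw.trans hwc
  have comm : ∀ i : Fin n, rr i * piP g = piP g * rr i := by
    intro i
    rw [← piP_of i, ← map_mul, ← map_mul, Subgroup.mem_center_iff.mp hg (HWx n i)]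
  have hce : piP g ⟨[], List.isChain_nil⟩ = ⟨c, hc⟩ := by
    rw [hpi]
    have happ : (c ++ ([] : List (Fin n))).IsChain (· ≠ ·) := by simpa using hc
    exact (act_chain c [] happ).trans (Subtype.ext (List.append_nil c))
  suffices hcnil : c = [] by
    subst hcnil
    exact hce
  by_contra hne0
  obtain ⟨a, t, rfl⟩ := List.exists_cons_of_ne_nil hne0
  clear hne0
  set c := a :: t with hcdef
  have hne0 : c ≠ [] := List.cons_ne_nil a t
  have hlen : 0 < c.length := List.length_pos_iff.mpr hne0
  -- evaluation of the commutation relation at the empty word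
  have ev1 : ∀ i : Fin n, (piP g ⟨[i], List.isChain_singleton i⟩).1 = (step i ⟨c, hc⟩).1 := by
    intro i
    have h2 := congrArg (fun p : Equiv.Perm (Lch n) => (p ⟨[], List.isChain_nil⟩ : Lch n)) (comm i)
    simp only [Equiv.Perm.mul_apply] at h2
    rw [hce] at h2
    exact congrArg Subtype.val h2.symm
  by_cases hex : ∃ i : Fin n, i ≠ a ∧ i ≠ c.getLast hne0
  · obtain ⟨i, hia, hil⟩ := hex
    have hchain : (c ++ [i]).IsChain (· ≠ ·) := by
      refine List.isChain_append.mpr ⟨hc, List.isChain_singleton i, ?_⟩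
      intro x hx y hy
      rw [List.getLast?_eq_getLast hne0, Option.mem_some_iff] at hx
      simp only [List.head?_cons, Option.mem_some_iff] at hy
      rw [← hx, ← hy]
      exact Ne.symm hil
    have lhs : (piP g ⟨[i], List.isChain_singleton i⟩).1 = c ++ [i] := by
      rw [hpi]
      exact congrArg Subtype.val (act_chain c [i] hchain)
    have rhs : (step i ⟨c, hc⟩).1 = i :: c := by
      refine step_val i ⟨c, hc⟩ ?_
      intro y hy
      simp only [hcdef, List.head?_cons, Option.mem_some_iff] at hy
      subst hy
      exact hia
    have key : c ++ [i] = i :: c := by rw [← lhs, ev1 i, rhs]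
    rw [hcdef] at key
    simp only [List.cons_append, List.cons.injEq] at key
    exact hia key.1.symm
  · push_neg at hex
    have hal : a ≠ c.getLast hne0 := by
      intro h
      haveI : Nontrivial (Fin n) :=
        ⟨⟨⟨0, by omega⟩, ⟨1, by omega⟩, by simp [Fin.ext_iff]⟩⟩
      obtain ⟨i₁, i₂, h12⟩ := exists_pair_ne (Fin n)
      have hall : ∀ i : Fin n, i = a := by
        intro i
        by_cases hia : i = a
        · exact hia
        · exact (hex i hia).trans h.symm
      exact h12 ((hall i₁).trans (hall i₂).symm)
    set i := c.getLast hne0 with hidef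
    have hia : i ≠ a := Ne.symm hal
    have rhs : (step i ⟨c, hc⟩).1 = i :: c := by
      refine step_val i ⟨c, hc⟩ ?_
      intro y hy
      simp only [hcdef, List.head?_cons, Option.mem_some_iff] at hy
      subst hy
      exact hia
    have hdc : c.dropLast ++ [i] = c := List.dropLast_append_getLast hne0
    have hdchain : (c.dropLast ++ ([] : List (Fin n))).IsChain (· ≠ ·) := by
      rw [List.append_nil]
      exact (List.isChain_append.mp (hdc ▸ hc)).1
    have lhs : (piP g ⟨[i], List.isChain_singleton i⟩).1 = c.dropLast := by
      rw [hpi]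
      have hsplit : act c = act c.dropLast * rr i := by
        conv_lhs => rw [← hdc]
        rw [act_append, act_cons, act_nil, mul_one]
      rw [hsplit, Equiv.Perm.mul_apply]
      have h1 : rr i ⟨[i], List.isChain_singleton i⟩ = ⟨[], List.isChain_nil⟩ :=
        step_cons_eq i [] (List.isChain_singleton i)
      rw [h1]
      have h2 := congrArg Subtype.val (act_chain c.dropLast [] hdchain)
      exact h2.trans (List.append_nil _)
    have key : c.dropLast = i :: c := by rw [← lhs, ev1 i, rhs]
    have hklen := congrArg List.length key
    simp only [List.length_dropLast, List.length_cons] at hklen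
    omega

end HWproof

namespace HWproof

variable {n : ℕ}

theorem HW_rel {i j : Fin n} (hij : i ≠ j) :
    (HWx n i)⁻¹ * (HWx n j) ^ 2 * HWx n i * (HWx n j) ^ 2 = 1 := by
  have hmem : ((FreeGroup.of i)⁻¹ * (FreeGroup.of j) ^ 2 * FreeGroup.of i
      * (FreeGroup.of j) ^ 2) ∈ HWrels n := ⟨i, j, hij, rfl⟩
  have heq : ((HWx n i)⁻¹ * (HWx n j) ^ 2 * HWx n i * (HWx n j) ^ 2 : HW n)
      = PresentedGroup.mk (HWrels n) ((FreeGroup.of i)⁻¹ * (FreeGroup.of j) ^ 2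
        * FreeGroup.of i * (FreeGroup.of j) ^ 2) := by
    simp only [map_mul, map_inv, map_pow]
    rfl
  rw [heq]
  exact (QuotientGroup.eq_one_iff _).mpr (Subgroup.subset_normalClosure hmem)

theorem HW_conj1 {i j : Fin n} (hij : i ≠ j) :
    (HWx n i)⁻¹ * (HWx n j) ^ 2 * HWx n i = ((HWx n j) ^ 2)⁻¹ := by
  rw [eq_inv_iff_mul_eq_one]
  exact HW_rel hij

theorem HW_conj1' {i j : Fin n} (hij : i ≠ j) :
    (HWx n i)⁻¹ * ((HWx n j) ^ 2)⁻¹ * HWx n i = (HWx n j) ^ 2 :=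
  calc (HWx n i)⁻¹ * ((HWx n j) ^ 2)⁻¹ * HWx n i
      = ((HWx n i)⁻¹ * (HWx n j) ^ 2 * HWx n i)⁻¹ := by simp [mul_assoc]
    _ = (((HWx n j) ^ 2)⁻¹)⁻¹ := by rw [HW_conj1 hij]
    _ = (HWx n j) ^ 2 := inv_inv _

theorem HW_conj2 {i j : Fin n} (hij : i ≠ j) :
    HWx n i * (HWx n j) ^ 2 * (HWx n i)⁻¹ = ((HWx n j) ^ 2)⁻¹ := by
  have h := HW_conj1' hij
  conv_lhs => rw [← h]
  simp [mul_assoc]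

theorem commute_sq (i j : Fin n) : Commute ((HWx n i) ^ 2) ((HWx n j) ^ 2) := by
  by_cases hij : i = j
  · subst hij; exact Commute.refl _
  · have e1 : HWx n j ^ 2 * HWx n i = HWx n i * (HWx n j ^ 2)⁻¹ := by
      conv_lhs => rw [show (HWx n j ^ 2 * HWx n i : HW n)
        = HWx n i * ((HWx n i)⁻¹ * HWx n j ^ 2 * HWx n i) by group]
      rw [HW_conj1 hij]
    have e2 : (HWx n j ^ 2)⁻¹ * HWx n i = HWx n i * HWx n j ^ 2 := by
      conv_lhs => rw [show ((HWx n j ^ 2)⁻¹ * HWx n i : HW n)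
        = HWx n i * ((HWx n i)⁻¹ * (HWx n j ^ 2)⁻¹ * HWx n i) by group]
      rw [HW_conj1' hij]
    have key : HWx n j ^ 2 * HWx n i ^ 2 = HWx n i ^ 2 * HWx n j ^ 2 := by
      calc HWx n j ^ 2 * HWx n i ^ 2 = (HWx n j ^ 2 * HWx n i) * HWx n i := by
            simp [pow_two, mul_assoc]
        _ = HWx n i * ((HWx n j ^ 2)⁻¹ * HWx n i) := by rw [e1]; simp [mul_assoc]
        _ = HWx n i * (HWx n i * HWx n j ^ 2) := by rw [e2]
        _ = HWx n i ^ 2 * HWx n j ^ 2 := by simp [pow_two, mul_assoc]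
    exact key.symm

/-- The subgroup generated by the squares of the generators. -/
def NN (n : ℕ) : Subgroup (HW n) := Subgroup.closure (Set.range fun i => HWx n i ^ 2)

theorem sq_mem_NN (i : Fin n) : HWx n i ^ 2 ∈ NN n :=
  Subgroup.subset_closure ⟨i, rfl⟩

theorem conj_mem_NN (j : Fin n) {h : HW n} (hh : h ∈ NN n) :
    HWx n j * h * (HWx n j)⁻¹ ∈ NN n := by
  induction hh using Subgroup.closure_induction with
  | mem x hx =>
    obtain ⟨k, rfl⟩ := hx
    by_cases hjk : j = k
    · subst hjk
      have : HWx n j * HWx n j ^ 2 * (HWx n j)⁻¹ = HWx n j ^ 2 := by group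
      rw [this]
      exact sq_mem_NN j
    · rw [HW_conj2 hjk]
      exact inv_mem (sq_mem_NN k)
  | one => simpa using one_mem (NN n)
  | mul x y hx hy ihx ihy =>
    have : HWx n j * (x * y) * (HWx n j)⁻¹
        = (HWx n j * x * (HWx n j)⁻¹) * (HWx n j * y * (HWx n j)⁻¹) := by group
    rw [this]
    exact mul_mem ihx ihy
  | inv x hx ihx =>
    have : HWx n j * x⁻¹ * (HWx n j)⁻¹ = (HWx n j * x * (HWx n j)⁻¹)⁻¹ := by group
    rw [this]
    exact inv_mem ihx

theorem conj_mem_NN' (j : Fin n) {h : HW n} (hh : h ∈ NN n) :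
    (HWx n j)⁻¹ * h * HWx n j ∈ NN n := by
  induction hh using Subgroup.closure_induction with
  | mem x hx =>
    obtain ⟨k, rfl⟩ := hx
    by_cases hjk : j = k
    · subst hjk
      have : (HWx n j)⁻¹ * HWx n j ^ 2 * HWx n j = HWx n j ^ 2 := by group
      rw [this]
      exact sq_mem_NN j
    · rw [HW_conj1 hjk]
      exact inv_mem (sq_mem_NN k)
  | one => simpa using one_mem (NN n)
  | mul x y hx hy ihx ihy =>
    have : (HWx n j)⁻¹ * (x * y) * HWx n j
        = ((HWx n j)⁻¹ * x * HWx n j) * ((HWx n j)⁻¹ * y * HWx n j) := by group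
    rw [this]
    exact mul_mem ihx ihy
  | inv x hx ihx =>
    have : (HWx n j)⁻¹ * x⁻¹ * HWx n j = ((HWx n j)⁻¹ * x * HWx n j)⁻¹ := by group
    rw [this]
    exact inv_mem ihx

instance NN_normal : (NN n).Normal := by
  rw [← Subgroup.normalizer_eq_top_iff, eq_top_iff]
  intro g _
  refine PresentedGroup.generated_by _ (Subgroup.normalizer (NN n : Set (HW n))) (fun j => ?_) g
  rw [Subgroup.mem_normalizer_iff]
  intro h
  constructor
  · intro hh
    exact conj_mem_NN j hh
  · intro hh
    have h2 := conj_mem_NN' j hh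
    have h3 : (HWx n j)⁻¹ * (HWx n j * h * (HWx n j)⁻¹) * HWx n j ∈ NN n := h2
    have heq : (HWx n j)⁻¹ * (HWx n j * h * (HWx n j)⁻¹) * HWx n j = h := by group
    rwa [heq] at h3

end HWproof

namespace HWproof

variable {n : ℕ}

/-- evaluation of a reduced word in the quotient `HW n ⧸ NN n`. -/
def beta (l : Lch n) : HW n ⧸ NN n :=
  (l.1.map fun i => (QuotientGroup.mk' (NN n)) (HWx n i)).prod

theorem xbar_sq (i : Fin n) :
    (QuotientGroup.mk' (NN n)) (HWx n i) * (QuotientGroup.mk' (NN n)) (HWx n i) = 1 := by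
  rw [← map_mul, ← pow_two, QuotientGroup.mk'_apply, QuotientGroup.eq_one_iff]
  exact sq_mem_NN i

theorem beta_step (i : Fin n) (l : Lch n) :
    beta (step i l) = (QuotientGroup.mk' (NN n)) (HWx n i) * beta l := by
  obtain ⟨l, hl⟩ := l
  match l, hl with
  | [], _ => simp [beta, step]
  | j :: t, h =>
    by_cases hij : i = j
    · subst hij
      rw [step_cons_eq]
      show beta ⟨t, h.tail⟩ = _ * beta ⟨i :: t, h⟩
      have hb : beta ⟨i :: t, h⟩ = (QuotientGroup.mk' (NN n)) (HWx n i) * beta ⟨t, h.tail⟩ := by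
        simp [beta]
      rw [hb, ← mul_assoc, xbar_sq, one_mul]
    · rw [step_cons_ne hij]
      simp [beta]

/-- the subgroup of elements acting as left translations w.r.t. `beta` -/
def betaSub (n : ℕ) : Subgroup (HW n) where
  carrier := {g : HW n | ∀ l : Lch n, beta (piP g l) = (QuotientGroup.mk' (NN n)) g * beta l}
  one_mem' := by intro l; simp
  mul_mem' := by
    intro a b ha hb l
    rw [map_mul, Equiv.Perm.mul_apply, ha, hb, map_mul, mul_assoc]
  inv_mem' := by
    intro a ha l
    have h1 := ha ((piP a⁻¹) l)
    have h2 : (piP a) ((piP a⁻¹) l) = l := by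
      rw [map_inv]
      exact Equiv.apply_symm_apply _ l
    rw [map_inv (QuotientGroup.mk' (NN n)) a]
    symm
    rw [inv_mul_eq_iff_eq_mul]
    rw [← h1, h2]

theorem beta_apply (g : HW n) (l : Lch n) :
    beta (piP g l) = (QuotientGroup.mk' (NN n)) g * beta l := by
  have hg : g ∈ betaSub n := by
    refine PresentedGroup.generated_by _ (betaSub n) (fun j => ?_) g
    intro l
    rw [show (PresentedGroup.of j : HW n) = HWx n j from rfl, piP_of, rr_apply, beta_step]
  exact hg l

theorem central_mem_NN (hn : 1 < n) {g : HW n} (hg : g ∈ Subgroup.center (HW n)) :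
    g ∈ NN n := by
  have h1 := beta_apply g ⟨[], List.isChain_nil⟩
  rw [central_fixes hn hg] at h1
  have h2 : (QuotientGroup.mk' (NN n)) g = 1 := by
    have hb : beta (⟨[], List.isChain_nil⟩ : Lch n) = 1 := rfl
    rw [hb, mul_one] at h1
    exact h1.symm
  rwa [QuotientGroup.mk'_apply, QuotientGroup.eq_one_iff] at h2

end HWproof

namespace HWproof

variable {n : ℕ}

theorem comm_aux (a : Fin n → ℤ) :
    ((Finset.univ : Finset (Fin n)) : Set (Fin n)).Pairwise
      (Function.onFun Commute fun j => (HWx n j ^ 2) ^ (a j)) :=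
  fun j _ k _ _ => (commute_sq j k).zpow_zpow (a j) (a k)

/-- products of powers of the squares of the generators. -/
def prodN (a : Fin n → ℤ) : HW n :=
  Finset.univ.noncommProd (fun j => (HWx n j ^ 2) ^ (a j)) (comm_aux a)

theorem prodN_zero : prodN (0 : Fin n → ℤ) = 1 := by
  have h := Finset.noncommProd_eq_pow_card Finset.univ
    (fun j => (HWx n j ^ 2) ^ ((0 : Fin n → ℤ) j)) (comm_aux 0) 1 (fun x _ => by simp)
  simpa [prodN] using h

theorem prodN_add (a b : Fin n → ℤ) : prodN a * prodN b = prodN (a + b) := by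
  have h := Finset.noncommProd_mul_distrib
    (fun j => (HWx n j ^ 2) ^ (a j)) (fun j => (HWx n j ^ 2) ^ (b j))
    (comm_aux a) (comm_aux b)
    (fun j _ k _ _ => (commute_sq j k).zpow_zpow (b j) (a k))
  rw [prodN, prodN, ← h, prodN]
  exact Finset.noncommProd_congr rfl
    (fun x _ => by simp [Pi.mul_apply, Pi.add_apply, zpow_add]) _

theorem prodN_single (i : Fin n) : prodN (Pi.single i 1) = HWx n i ^ 2 := by
  have key := Finset.mul_noncommProd_erase Finset.univ (Finset.mem_univ i)
    (fun j => (HWx n j ^ 2) ^ ((Pi.single i 1 : Fin n → ℤ) j)) (comm_aux _)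
    (@id (((Finset.univ.erase i : Finset (Fin n)) : Set (Fin n)).Pairwise
      (Function.onFun Commute fun j => (HWx n j ^ 2) ^ ((Pi.single i 1 : Fin n → ℤ) j)))
      (fun j _ k _ _ => (commute_sq j k).zpow_zpow ((Pi.single i 1 : Fin n → ℤ) j) ((Pi.single i 1 : Fin n → ℤ) k)))
  rw [prodN, ← key, Finset.noncommProd_eq_pow_card _ _ _ 1 (fun x hx => by
      obtain ⟨hxi, _⟩ := Finset.mem_erase.mp hx
      simp [Pi.single_eq_of_ne hxi]), one_pow, mul_one]
  simp

theorem mem_NN_prodN {g : HW n} (hg : g ∈ NN n) : ∃ a : Fin n → ℤ, g = prodN a := by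
  induction hg using Subgroup.closure_induction with
  | mem x hx =>
    obtain ⟨k, rfl⟩ := hx
    exact ⟨Pi.single k 1, (prodN_single k).symm⟩
  | one => exact ⟨0, prodN_zero.symm⟩
  | mul x y hx hy ihx ihy =>
    obtain ⟨a, rfl⟩ := ihx
    obtain ⟨b, rfl⟩ := ihy
    exact ⟨a + b, prodN_add a b⟩
  | inv x hx ihx =>
    obtain ⟨a, rfl⟩ := ihx
    refine ⟨-a, inv_eq_of_mul_eq_one_right ?_⟩
    rw [prodN_add]
    rw [show a + -a = 0 by funext j; simp]
    exact prodN_zero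

/-- the translation part embedding into the model group. -/
def tau : Multiplicative (Fin n → ℤ) →* Hgrp n where
  toFun v := ⟨Multiplicative.toAdd v, 1⟩
  map_one' := by
    refine Hgrp.ext_pt (fun j => ?_) (fun j => rfl)
    rfl
  map_mul' v w := by
    refine Hgrp.ext_pt (fun j => ?_) (fun j => by simp)
    simp [toAdd_mul]

theorem Phi_sq (i : Fin n) :
    Phi (HWx n i ^ 2) = tau (Multiplicative.ofAdd (Pi.single i (2 : ℤ))) := by
  rw [map_pow, Phi_of, gen_sq]
  rfl

set_option maxHeartbeats 1000000 in
theorem Phi_prodN (a : Fin n → ℤ) :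
    Phi (prodN a) = tau (Multiplicative.ofAdd (∑ j, a j • Pi.single j (2 : ℤ))) := by
  have hfun : ∀ j, Phi ((HWx n j ^ 2) ^ (a j))
      = tau (Multiplicative.ofAdd (a j • Pi.single j (2 : ℤ))) := by
    intro j
    rw [map_zpow, Phi_sq, ← map_zpow, ← ofAdd_zsmul]
  refine (Finset.map_noncommProd Finset.univ _ (comm_aux a) Phi).trans ?_
  refine (Finset.noncommProd_congr rfl (fun x _ => hfun x)
    (fun j hj k hk hjk => ((comm_aux a) hj hk hjk).map Phi)).trans ?_
  refine ((Finset.map_noncommProd Finset.univ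
    (fun j => Multiplicative.ofAdd (a j • Pi.single j (2 : ℤ)))
    (fun j _ k _ _ => Commute.all _ _) tau).symm).trans ?_
  congr 1
  rw [Finset.noncommProd_eq_prod]
  exact (ofAdd_sum _ _).symm

theorem central_eq_one (hn : 1 < n) {g : HW n} (hg : g ∈ Subgroup.center (HW n)) :
    g = 1 := by
  obtain ⟨a, rfl⟩ := mem_NN_prodN (central_mem_NN hn hg)
  have hphi := Phi_central hn hg
  rw [Phi_prodN] at hphi
  have hv := congrArg Hgrp.v hphi
  have hS : (∑ j, a j • Pi.single j (2 : ℤ)) = 0 := hv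
  have ha : ∀ k, a k = 0 := by
    intro k
    have hk := congrFun hS k
    rw [Finset.sum_apply] at hk
    rw [Finset.sum_eq_single k (fun j _ hjk => by
        simp [Pi.single_eq_of_ne (Ne.symm hjk)]) (by simp)] at hk
    simp [Pi.single_eq_same, smul_eq_mul] at hk
    omega
  rw [show a = 0 from funext ha]
  exact prodN_zero

end HWproof

/-- For `n > 1`, the center of `Gₙ` is trivial. -/
theorem center_HW_trivial (n : ℕ) (hn : 1 < n) :
    Subgroup.center (HW n) = ⊥ := by
  rw [Subgroup.eq_bot_iff_forall]
  exact fun x hx => HWproof.central_eq_one hn hx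
end

section
/- For n > 1, if v is an element of A_n = ⟨x_1^2,…,x_n^2⟩ ≤ G_n that commutes with both x_1 and x_2, then v = 1. Concretely: if v = (x_1^2)^{a_1}⋯(x_n^2)^{a_n} with integer exponents, and x_1 v x_1^{-1} = v and x_2 v x_2^{-1} = v, then all a_i = 0. -/
/-!
Fix `k`. Sending `xₖ` to the translation `r 1` and every other generator to the reflection `sr 0`
of the infinite dihedral group respects the relations, since a reflection inverts `r 2`. This map
sends `∏ (xᵢ²)^{aᵢ}` to `r (2 aₖ)`, which the image of any `xₘ` with `m ≠ k` conjugates to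
`r (-2 aₖ)`; so if `xₘ` commutes with the product, then `aₖ = 0`. As `n > 1`, every `k` differs
from `0` or from `1`.
-/

open DihedralGroup

theorem List.prod_ofFn_zpow {G : Type*} [Group G] (g : G) {n : ℕ} (c : Fin n → ℤ) :
    (List.ofFn fun i => g ^ c i).prod = g ^ ∑ i, c i := by
  induction n with
  | zero => simp
  | succ n ih => simp [List.ofFn_succ, Fin.sum_univ_succ, ih, zpow_add]

theorem DihedralGroup.sr_mul_r_mul_inv_sr {m : ℕ} (i j : ZMod m) :
    sr i * r j * (sr i)⁻¹ = r (-j) := by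
  rw [inv_sr, sr_mul_r, sr_mul_sr, sub_add_cancel_left]

namespace HW

variable {n : ℕ}

def dihedralImage (k i : Fin n) : DihedralGroup 0 := if i = k then r 1 else sr 0

theorem dihedralImage_sq (k i : Fin n) :
    dihedralImage k i ^ 2 = r 1 ^ (if i = k then (2 : ℤ) else 0) := by
  unfold dihedralImage
  split_ifs
  · simp [sq, r_mul_r]
  · simp [sq]

theorem lift_dihedralImage_eq_one_of_mem (k : Fin n) :
    ∀ ρ ∈ HWrels n, FreeGroup.lift (dihedralImage k) ρ = 1 := by
  rintro _ ⟨i, j, hij, rfl⟩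
  simp only [map_mul, map_inv, map_pow, FreeGroup.lift_apply_of, dihedralImage_sq]
  by_cases hj : j = k
  · subst hj
    simp [dihedralImage, hij, sr_mul_r, sr_mul_sr, r_mul_r]
  · simp [hj]

def toDihedral (k : Fin n) : HW n →* DihedralGroup 0 :=
  PresentedGroup.toGroup (lift_dihedralImage_eq_one_of_mem k)

theorem toDihedral_x (k i : Fin n) : toDihedral k (HWx n i) = dihedralImage k i :=
  PresentedGroup.toGroup.of _

def monomial (a : Fin n → ℤ) : HW n := (List.ofFn fun i => (HWx n i ^ 2) ^ a i).prod

theorem toDihedral_monomial (k : Fin n) (a : Fin n → ℤ) :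
    toDihedral k (monomial a) = r 1 ^ (2 * a k) := by
  simp only [monomial, map_list_prod, List.map_ofFn, Function.comp_def, map_zpow, map_pow,
    toDihedral_x, dihedralImage_sq, ← zpow_mul, List.prod_ofFn_zpow]
  simp

theorem exponent_eq_zero_of_conj_monomial {m k : Fin n} (hmk : m ≠ k) (a : Fin n → ℤ)
    (h : HWx n m * monomial a * (HWx n m)⁻¹ = monomial a) : a k = 0 := by
  have h' := congrArg (toDihedral k) h
  simp only [map_mul, map_inv, toDihedral_x, toDihedral_monomial, dihedralImage, if_neg hmk,
    r_one_zpow, sr_mul_r_mul_inv_sr, r.injEq] at h'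
  change -(2 * a k) = 2 * a k at h'
  omega

end HW

/-- For `n > 1`: if `v = (x₁²)^{a₁} ⋯ (xₙ²)^{aₙ} ∈ Aₙ` commutes with `x₁` and `x₂`,
then all exponents `aᵢ` vanish (so `v = 1`). -/
theorem central_in_A_trivial (n : ℕ) (hn : 1 < n) (a : Fin n → ℤ) (v : HW n)
    (hv : v = (List.ofFn fun i : Fin n => ((HWx n i) ^ 2) ^ (a i)).prod)
    (h1 : HWx n ⟨0, by omega⟩ * v * (HWx n ⟨0, by omega⟩)⁻¹ = v)
    (h2 : HWx n ⟨1, by omega⟩ * v * (HWx n ⟨1, by omega⟩)⁻¹ = v) :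
    ∀ i, a i = 0 := by
  subst hv
  intro k
  by_cases hk : k = ⟨0, by omega⟩
  · exact HW.exponent_eq_zero_of_conj_monomial (by simp [hk, Fin.ext_iff]) a h2
  · exact HW.exponent_eq_zero_of_conj_monomial (Ne.symm hk) a h1
end
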